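/- Let ℓ be differentiable and not attain a local minimum at the origin, and let n ≥ 3. Then the origin (0,0,…,0) is a stationary point of φ(W₁,…,Wₙ) = ℓ(Wₙ⋯W₁) with positive semidefinite (in fact zero) Hessian, yet it is not a local minimizer of φ: for every ε > 0 there exist weight matrices (W₁,…,Wₙ) of norm less than ε·√n with φ(W₁,…,Wₙ) < φ(0,…,0). -/

import Mathlib

/-
Rescaling layer `j` by `t` and layer `q` by `t⁻¹` leaves `Wₙ⋯W₁` unchanged, so `φ` is invariant
under these linear maps of the weight space, which fix the origin. With `n ≥ 3` layers, any two
layers `j, k` leave a third layer `q` to compensate, and the invariance forces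
`Dφ(0)(eⱼ) = 2 Dφ(0)(eⱼ)` and `D²φ(0)(eⱼ, eₖ) = c D²φ(0)(eⱼ, eₖ)` with `c ∈ {2, 4}`; no
smoothness of `ℓ` is needed. For the descent, the product map is open at the origin: with `E`
the partial identities of rank `min(d₀, dₙ)`, which pass through every hidden layer,
`W = (t E)⋯(t E)(t^{1-n} E W)` (or its mirror image) lifts every small `W` to small weights.
-/

open Matrix

/-- Product `W (m-1) * ⋯ * W j` of a chain of matrices with dimensions given by `d`
(the identity when `m = j`, junk when `m < j`). -/
noncomputable def chain (d : ℕ → ℕ) (W : ∀ k : ℕ, Matrix (Fin (d (k + 1))) (Fin (d k)) ℝ)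
    (j : ℕ) : (m : ℕ) → Matrix (Fin (d m)) (Fin (d j)) ℝ
  | 0 => if h : j = 0 then by subst h; exact 1 else 0
  | m + 1 => if h : j = m + 1 then by subst h; exact 1 else W m * chain d W j m

attribute [local instance] Matrix.frobeniusNormedAddCommGroup Matrix.frobeniusNormedSpace

open Filter Topology

theorem eq_zero_of_smul_eq_self {R F : Type*} [DivisionRing R] [AddCommGroup F] [Module R F]
    {c : R} (hc : c ≠ 1) {a : F} (h : c • a = a) : a = 0 := by
  have : (c - 1) • a = 0 := by rw [sub_smul, one_smul, h, sub_self]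
  exact (smul_eq_zero.mp this).resolve_left (sub_ne_zero.mpr hc)

section Invariance

variable {𝕜 E F : Type*} [NontriviallyNormedField 𝕜] [NormedAddCommGroup E] [NormedSpace 𝕜 E]
  [NormedAddCommGroup F] [NormedSpace 𝕜 F] {f : E → F}

theorem fderiv_apply_map_eq_of_comp_eq (L : E ≃L[𝕜] E) (hf : f ∘ L = f) {x : E} (hx : L x = x)
    (v : E) : fderiv 𝕜 f x (L v) = fderiv 𝕜 f x v := by
  conv_rhs => rw [← hf, L.comp_right_fderiv, hx]
  rfl

theorem fderiv_fderiv_apply_map_eq_of_comp_eq (L : E ≃L[𝕜] E) (hf : f ∘ L = f) {x : E}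
    (hx : L x = x) (u v : E) :
    fderiv 𝕜 (fderiv 𝕜 f) x (L u) (L v) = fderiv 𝕜 (fderiv 𝕜 f) x u v := by
  have h : fderiv 𝕜 f = L.symm.arrowCongr (.refl 𝕜 F) ∘ fderiv 𝕜 f ∘ L := by
    funext y
    conv_lhs => rw [← hf, L.comp_right_fderiv]
    ext; simp
  conv_rhs => rw [h, ContinuousLinearEquiv.comp_fderiv, L.comp_right_fderiv, hx]
  simp

end Invariance

section Rebalancing

variable {ι F : Type*} [DecidableEq ι] {M : ι → Type*}
  [∀ i, NormedAddCommGroup (M i)] [∀ i, NormedSpace ℝ (M i)] {f : (∀ i, M i) → F}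

noncomputable def rebalance (j q : ι) (t : ℝˣ) : (∀ i, M i) ≃L[ℝ] (∀ i, M i) :=
  .piCongrRight fun i => .smulLeft ((Pi.mulSingle j t * Pi.mulSingle q t⁻¹ : ι → ℝˣ) i)

theorem rebalance_apply (j q : ι) (t : ℝˣ) (x : ∀ i, M i) (i : ι) :
    rebalance j q t x i = (Pi.mulSingle j t * Pi.mulSingle q t⁻¹ : ι → ℝˣ) i • x i :=
  rfl

theorem comp_rebalance [Fintype ι]
    (hf : ∀ c : ι → ℝˣ, ∏ i, c i = 1 → ∀ x, f (fun i => c i • x i) = f x) (j q : ι) (t : ℝˣ) :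
    f ∘ rebalance j q t = f := by
  funext x
  refine hf _ ?_ x
  simp [Finset.prod_mul_distrib, Finset.prod_pi_mulSingle']

theorem rebalance_single_self {j q : ι} (hq : q ≠ j) (t : ℝˣ) (v : M j) :
    rebalance j q t (Pi.single j v) = (t : ℝ) • Pi.single j v := by
  ext i
  rcases eq_or_ne i j with rfl | hi
  · simp [rebalance_apply, hq.symm, Units.smul_def]
  · simp [rebalance_apply, hi]

theorem rebalance_single_of_ne {j q k : ι} (hj : k ≠ j) (hq : k ≠ q) (t : ℝˣ) (v : M k) :
    rebalance j q t (Pi.single k v) = Pi.single k v := by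
  ext i
  rcases eq_or_ne i k with rfl | hi
  · simp [rebalance_apply, hj, hq]
  · simp [rebalance_apply, hi]

theorem fderiv_eq_zero_of_rebalance_invariant [Fintype ι] [Nontrivial ι]
    [NormedAddCommGroup F] [NormedSpace ℝ F]
    (hf : ∀ c : ι → ℝˣ, ∏ i, c i = 1 → ∀ x, f (fun i => c i • x i) = f x) :
    fderiv ℝ f 0 = 0 := by
  refine ContinuousLinearMap.coe_injective (LinearMap.pi_ext fun j v => ?_)
  obtain ⟨q, hq⟩ := exists_ne j
  have h := fderiv_apply_map_eq_of_comp_eq _ (comp_rebalance hf j q (.mk0 2 two_ne_zero))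
    (map_zero _) (Pi.single j v)
  rw [rebalance_single_self hq, map_smul, Units.val_mk0] at h
  exact eq_zero_of_smul_eq_self (by norm_num) h

theorem fderiv_fderiv_eq_zero_of_rebalance_invariant [Fintype ι] [NormedAddCommGroup F]
    [NormedSpace ℝ F] (hι : 3 ≤ Fintype.card ι)
    (hf : ∀ c : ι → ℝˣ, ∏ i, c i = 1 → ∀ x, f (fun i => c i • x i) = f x) :
    fderiv ℝ (fderiv ℝ f) 0 = 0 := by
  refine ContinuousLinearMap.coe_injective (LinearMap.pi_ext fun j u => ?_)
  refine ContinuousLinearMap.coe_injective (LinearMap.pi_ext fun k v => ?_)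
  obtain ⟨q, hq⟩ : ({j, k}ᶜ : Finset ι).Nonempty := by
    rw [← Finset.card_pos, Finset.card_compl]
    have := Finset.card_le_two (a := j) (b := k)
    omega
  simp only [Finset.mem_compl, Finset.mem_insert, Finset.mem_singleton, not_or] at hq
  obtain ⟨hqj, hqk⟩ := hq
  have h := fderiv_fderiv_apply_map_eq_of_comp_eq _
    (comp_rebalance hf j q (.mk0 2 two_ne_zero)) (map_zero _) (Pi.single j u) (Pi.single k v)
  rw [rebalance_single_self hqj] at h
  rcases eq_or_ne k j with rfl | hkj
  · rw [rebalance_single_self hqj] at h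
    simp only [map_smul, _root_.smul_apply, Units.val_mk0, smul_smul] at h
    exact eq_zero_of_smul_eq_self (by norm_num) h
  · rw [rebalance_single_of_ne hkj (Ne.symm hqk)] at h
    simp only [map_smul, _root_.smul_apply, Units.val_mk0] at h
    exact eq_zero_of_smul_eq_self (by norm_num) h

end Rebalancing

theorem nhds_le_map_of_tendsto_rightInverse {X Y T : Type*} [TopologicalSpace X]
    [TopologicalSpace Y] {g : X → Y} {σ : T → Y → X} {l : Filter T} [l.NeBot] {x : X} {y : Y}
    (hσ : ∀ t, ContinuousAt (σ t) y) (hgσ : ∀ᶠ t in l, ∀ y', g (σ t y') = y')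
    (hlim : Tendsto (fun t => σ t y) l (𝓝 x)) : 𝓝 y ≤ map g (𝓝 x) := by
  intro s hs
  obtain ⟨t, hts, ht⟩ := ((hlim.eventually (eventually_mem_nhds_iff.mpr hs)).and hgσ).exists
  filter_upwards [hσ t hts] with y' hy'
  rwa [← ht y']

theorem sqrt_sum_sq_lt_mul_sqrt_card {ι : Type*} [Fintype ι] [Nonempty ι] {x : ι → ℝ} {ε : ℝ}
    (hx : ∀ i, |x i| < ε) : √(∑ i, x i ^ 2) < ε * √(Fintype.card ι) := by
  have hε : 0 < ε := (abs_nonneg _).trans_lt (hx (Classical.arbitrary ι))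
  calc √(∑ i, x i ^ 2) < √(∑ _i : ι, ε ^ 2) :=
        Real.sqrt_lt_sqrt (by positivity) (Finset.sum_lt_sum_of_nonempty Finset.univ_nonempty
          fun i _ => sq_lt_sq.mpr ((hx i).trans_eq (abs_of_pos hε).symm))
    _ = ε * √(Fintype.card ι) := by
      rw [Finset.sum_const, Finset.card_univ, nsmul_eq_mul, Real.sqrt_mul (Nat.cast_nonneg _),
        Real.sqrt_sq hε.le, mul_comm]

section Chain

variable {d : ℕ → ℕ} {W V : ∀ k : ℕ, Matrix (Fin (d (k + 1))) (Fin (d k)) ℝ}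

theorem chain_self (j : ℕ) : chain d W j j = 1 := by
  cases j <;> simp [chain]

theorem chain_succ {j m : ℕ} (h : j ≤ m) : chain d W j (m + 1) = W m * chain d W j m := by
  simp [chain, show j ≠ m + 1 by omega]

theorem chain_congr {j m : ℕ} (hjm : j ≤ m) (h : ∀ k, j ≤ k → k < m → W k = V k) :
    chain d W j m = chain d V j m := by
  induction m, hjm using Nat.le_induction with
  | base => rw [chain_self, chain_self]
  | succ m hjm ih =>
    rw [chain_succ hjm, chain_succ hjm, h m hjm m.lt_succ_self,
      ih fun k hjk hk => h k hjk (hk.trans m.lt_succ_self)]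

theorem chain_mul_chain {i j m : ℕ} (hij : i ≤ j) (hjm : j ≤ m) :
    chain d W j m * chain d W i j = chain d W i m := by
  induction m, hjm using Nat.le_induction with
  | base => rw [chain_self, Matrix.one_mul]
  | succ m hjm ih => rw [chain_succ hjm, chain_succ (hij.trans hjm), Matrix.mul_assoc, ih]

theorem chain_smul (c : ℕ → ℝ) {j m : ℕ} (hjm : j ≤ m) :
    chain d (fun k => c k • W k) j m = (∏ k ∈ Finset.Ico j m, c k) • chain d W j m := by
  induction m, hjm using Nat.le_induction with
  | base => simp [chain_self]
  | succ m hjm ih =>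
    rw [chain_succ hjm, chain_succ hjm, ih, Finset.prod_Ico_succ_top hjm, Matrix.smul_mul,
      Matrix.mul_smul, smul_smul, mul_comm]

end Chain

section PartialId

def partialId (R : Type*) [Zero R] [One R] (r a b : ℕ) : Matrix (Fin a) (Fin b) R :=
  of fun i j => if (i : ℕ) = j ∧ (i : ℕ) < r then 1 else 0

variable {R : Type*} [Semiring R]

theorem partialId_mul_partialId {r a b c : ℕ} (hb : r ≤ b) :
    partialId R r a b * partialId R r b c = partialId R r a c := by
  ext i k
  by_cases h : (i : ℕ) = k ∧ (i : ℕ) < r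
  · rw [mul_apply, Fintype.sum_eq_single ⟨i, h.2.trans_le hb⟩]
    · simp [partialId, h, h.1 ▸ h.2]
    · intro l hl
      have : partialId R r a b i l = 0 := if_neg fun h' => hl (Fin.ext h'.1.symm)
      rw [this, zero_mul]
  · simp only [mul_apply, partialId, of_apply, if_neg h]
    refine Finset.sum_eq_zero fun l _ => ?_
    split_ifs with h₁ h₂
    · exact absurd ⟨h₁.1.trans h₂.1, h₁.2⟩ h
    all_goals simp

theorem partialId_self {r a : ℕ} (ha : a ≤ r) : partialId R r a a = 1 := by
  ext i j
  simp [partialId, one_apply, Fin.ext_iff, lt_of_lt_of_le i.isLt ha]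

theorem chain_partialId {d : ℕ → ℕ} {r j m : ℕ} (hr : ∀ k, j < k → k < m → r ≤ d k)
    (hjm : j < m) :
    chain d (fun k => partialId ℝ r (d (k + 1)) (d k)) j m = partialId ℝ r (d m) (d j) := by
  induction m, hjm using Nat.le_induction with
  | base => rw [chain_succ le_rfl, chain_self, Matrix.mul_one]
  | succ m hjm ih =>
    rw [chain_succ (Nat.le_of_succ_le hjm), ih fun k hk hkm => hr k hk (by omega),
      partialId_mul_partialId (hr m hjm (by omega))]

end PartialId

theorem chain_update_zero_partialId {d : ℕ → ℕ} {r n : ℕ} (hn : 1 < n)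
    (hr : ∀ k, 0 < k → k < n → r ≤ d k) (hrn : d n ≤ r) (W : Matrix (Fin (d n)) (Fin (d 0)) ℝ) :
    chain d (Function.update (fun k => partialId ℝ r (d (k + 1)) (d k)) 0
      (partialId ℝ r (d 1) (d n) * W)) 0 n = W := by
  have h1 : chain d (Function.update (fun k => partialId ℝ r (d (k + 1)) (d k)) 0
      (partialId ℝ r (d 1) (d n) * W)) 1 n = partialId ℝ r (d n) (d 1) := by
    rw [chain_congr hn.le (V := fun k => partialId ℝ r (d (k + 1)) (d k))
      fun k hk _ => Function.update_of_ne (by omega) _ _,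
      chain_partialId (fun k _ hkn => hr k (by omega) hkn) hn]
  have h0 : chain d (Function.update (fun k => partialId ℝ r (d (k + 1)) (d k)) 0
      (partialId ℝ r (d 1) (d n) * W)) 0 1 = partialId ℝ r (d 1) (d n) * W := by
    simp [chain]
  rw [← chain_mul_chain zero_le_one hn.le, h1, h0, ← Matrix.mul_assoc,
    partialId_mul_partialId (hr 1 one_pos hn), partialId_self hrn, Matrix.one_mul]

theorem chain_update_last_partialId {d : ℕ → ℕ} {r m : ℕ} (hm : 0 < m)
    (hr : ∀ k, 0 < k → k < m + 1 → r ≤ d k) (hr0 : d 0 ≤ r)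
    (W : Matrix (Fin (d (m + 1))) (Fin (d 0)) ℝ) :
    chain d (Function.update (fun k => partialId ℝ r (d (k + 1)) (d k)) m
      (W * partialId ℝ r (d 0) (d m))) 0 (m + 1) = W := by
  rw [chain_succ m.zero_le, Function.update_self,
    chain_congr m.zero_le (V := fun k => partialId ℝ r (d (k + 1)) (d k))
      fun k _ hk => Function.update_of_ne hk.ne _ _,
    chain_partialId (fun k hk hkm => hr k hk (by omega)) hm, Matrix.mul_assoc,
    partialId_mul_partialId (hr m hm (by omega)), partialId_self hr0, Matrix.mul_one]

section EndToEnd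

variable {d : ℕ → ℕ} {n : ℕ}

noncomputable def endToEnd (d : ℕ → ℕ) (n : ℕ)
    (Ws : ∀ k : Fin n, Matrix (Fin (d (k + 1))) (Fin (d k)) ℝ) :
    Matrix (Fin (d n)) (Fin (d 0)) ℝ :=
  chain d (fun k => if h : k < n then Ws ⟨k, h⟩ else 0) 0 n

theorem endToEnd_eq_chain (V : ∀ k : ℕ, Matrix (Fin (d (k + 1))) (Fin (d k)) ℝ) :
    endToEnd d n (fun k => V k) = chain d V 0 n :=
  chain_congr n.zero_le fun _ _ hk => dif_pos hk

theorem endToEnd_smul (c : Fin n → ℝ)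
    (Ws : ∀ k : Fin n, Matrix (Fin (d (k + 1))) (Fin (d k)) ℝ) :
    endToEnd d n (fun k => c k • Ws k) = (∏ k, c k) • endToEnd d n Ws := by
  let c' : ℕ → ℝ := fun k => if h : k < n then c ⟨k, h⟩ else 1
  have h : endToEnd d n (fun k => c k • Ws k) =
      chain d (fun k => c' k • if h : k < n then Ws ⟨k, h⟩ else 0) 0 n :=
    chain_congr n.zero_le fun k _ hk => by simp [c', hk]
  rw [h, chain_smul _ n.zero_le, ← Finset.range_eq_Ico, ← Fin.prod_univ_eq_prod_range]
  simp [c', endToEnd]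

theorem nhds_le_map_endToEnd_of_chain_update_eq
    (E : ∀ k : ℕ, Matrix (Fin (d (k + 1))) (Fin (d k)) ℝ) {p : ℕ} (hp : p < n)
    {A : Matrix (Fin (d n)) (Fin (d 0)) ℝ → Matrix (Fin (d (p + 1))) (Fin (d p)) ℝ}
    (hA : Continuous A) (hA0 : A 0 = 0)
    (hchain : ∀ W, chain d (Function.update E p (A W)) 0 n = W) :
    𝓝 0 ≤ map (endToEnd d n) (𝓝 0) := by
  let σ (t : ℝ) (W : Matrix (Fin (d n)) (Fin (d 0)) ℝ) (k : Fin n) :=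
    Function.update (fun k => t • E k) p ((t ^ (n - 1))⁻¹ • A W) k
  refine nhds_le_map_of_tendsto_rightInverse (σ := σ) (l := 𝓝[≠] 0) (fun t => ?_) ?_ ?_
  · have hU : Continuous fun W => Function.update (fun k => t • E k) p ((t ^ (n - 1))⁻¹ • A W) :=
      continuous_const.update p (hA.const_smul (t ^ (n - 1))⁻¹)
    exact ((continuous_pi fun k => continuous_apply _).comp hU).continuousAt
  · filter_upwards [self_mem_nhdsWithin] with t (ht : t ≠ 0) W
    have h : Function.update (fun k => t • E k) p ((t ^ (n - 1))⁻¹ • A W) =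
        fun k => Function.update (fun _ => t) p (t ^ (n - 1))⁻¹ k •
          Function.update E p (A W) k := by
      funext k
      rcases eq_or_ne k p with rfl | hk
      · simp
      · simp [hk]
    rw [endToEnd_eq_chain, h, chain_smul _ n.zero_le, ← Finset.range_eq_Ico,
      Finset.prod_update_of_mem (Finset.mem_range.mpr hp), hchain]
    simp [Finset.card_sdiff, hp, ht]
  · simp only [σ, hA0, smul_zero]
    have hE : Continuous fun t : ℝ => Function.update (fun k => t • E k) p 0 :=
      (continuous_pi fun k => continuous_id.smul continuous_const).update p continuous_const
    have hσ0 :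
        Continuous fun t : ℝ => fun k : Fin n => Function.update (fun k => t • E k) p 0 k :=
      continuous_pi fun k => (continuous_apply (k : ℕ)).comp hE
    refine (hσ0.tendsto' 0 0 ?_).mono_left nhdsWithin_le_nhds
    funext k
    simp

end EndToEnd

theorem nhds_le_map_endToEnd {d : ℕ → ℕ} {n : ℕ} (hn : 1 < n)
    (hdims : ∀ j, 0 < j → j < n → min (d 0) (d n) ≤ d j) :
    𝓝 0 ≤ map (endToEnd d n) (𝓝 0) := by
  rcases le_total (d n) (d 0) with h | h
  · exact nhds_le_map_endToEnd_of_chain_update_eq _ (by omega)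
      (continuous_const.matrix_mul continuous_id) (Matrix.mul_zero _)
      (chain_update_zero_partialId hn hdims (le_min h le_rfl))
  · obtain ⟨m, rfl⟩ : ∃ m, n = m + 1 := ⟨n - 1, by omega⟩
    exact nhds_le_map_endToEnd_of_chain_update_eq _ m.lt_succ_self
      (continuous_id.matrix_mul continuous_const) (Matrix.zero_mul _)
      (chain_update_last_partialId (by omega) hdims (le_min le_rfl h))

theorem origin_nonstrict_saddle_general (d : ℕ → ℕ) (n : ℕ) (hn : 3 ≤ n)
    (hdims : ∀ j, 0 < j → j < n → min (d 0) (d n) ≤ d j)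
    (ℓ : Matrix (Fin (d n)) (Fin (d 0)) ℝ → ℝ)
    (hnotmin : ∀ ε > 0, ∃ W : Matrix (Fin (d n)) (Fin (d 0)) ℝ, ‖W‖ < ε ∧ ℓ W < ℓ 0) :
    fderiv ℝ (fun Ws : ∀ k : Fin n, Matrix (Fin (d (k + 1))) (Fin (d k)) ℝ =>
        ℓ (chain d (fun k => if h : k < n then Ws ⟨k, h⟩ else 0) 0 n)) 0 = 0 ∧
    fderiv ℝ (fderiv ℝ (fun Ws : ∀ k : Fin n, Matrix (Fin (d (k + 1))) (Fin (d k)) ℝ =>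
        ℓ (chain d (fun k => if h : k < n then Ws ⟨k, h⟩ else 0) 0 n))) 0 = 0 ∧
    ∀ ε > 0, ∃ Ws : ∀ k : Fin n, Matrix (Fin (d (k + 1))) (Fin (d k)) ℝ,
      Real.sqrt (∑ k, ‖Ws k‖ ^ 2) < ε * Real.sqrt n ∧
      ℓ (chain d (fun k => if h : k < n then Ws ⟨k, h⟩ else 0) 0 n) < ℓ 0 := by
  have hinv : ∀ c : Fin n → ℝˣ, ∏ i, c i = 1 → ∀ Ws,
      ℓ (endToEnd d n fun k => c k • Ws k) = ℓ (endToEnd d n Ws) := by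
    intro c hc Ws
    simp only [Units.smul_def, endToEnd_smul, ← Units.coe_prod, hc, Units.val_one, one_smul]
  have : Nontrivial (Fin n) := Fin.nontrivial_iff_two_le.mpr (by omega)
  refine ⟨fderiv_eq_zero_of_rebalance_invariant hinv,
    fderiv_fderiv_eq_zero_of_rebalance_invariant (by simpa using hn) hinv, fun ε hε => ?_⟩
  have hdescent : ∃ᶠ W in 𝓝 0, ℓ W < ℓ 0 := by
    refine Filter.frequently_iff.mpr fun hs => ?_
    obtain ⟨δ, hδ, hball⟩ := Metric.mem_nhds_iff.mp hs
    obtain ⟨W, hW, hℓW⟩ := hnotmin δ hδ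
    exact ⟨W, hball (mem_ball_zero_iff.mpr hW), hℓW⟩
  have hlift : ∃ᶠ Ws in 𝓝 0, ℓ (endToEnd d n Ws) < ℓ 0 :=
    frequently_map.mp (hdescent.filter_mono (nhds_le_map_endToEnd (by omega) hdims))
  obtain ⟨Ws, hℓWs, hWs⟩ := (hlift.and_eventually (Metric.ball_mem_nhds 0 hε)).exists
  refine ⟨Ws, ?_, hℓWs⟩
  simpa using sqrt_sum_sq_lt_mul_sqrt_card fun k => (abs_norm (Ws k)).trans_lt
    ((norm_le_pi_norm Ws k).trans_lt (mem_ball_zero_iff.mp hWs))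

/-- For `n ≥ 3` layers and a differentiable loss `ℓ` that does not attain a local minimum at the
origin, the origin is a stationary point of `φ(W₁,…,Wₙ) = ℓ(Wₙ⋯W₁)` with zero (in particular
positive semidefinite) Hessian, yet it is not a local minimizer: for every `ε > 0` there are
weights of (Frobenius tuple) norm less than `ε·√n` with `φ(W₁,…,Wₙ) < φ(0,…,0)`. -/
theorem origin_nonstrict_saddle (d : ℕ → ℕ) (n : ℕ) (hn : 3 ≤ n)
    (hdims : ∀ j, 0 < j → j < n → min (d 0) (d n) ≤ d j)
    (ℓ : Matrix (Fin (d n)) (Fin (d 0)) ℝ → ℝ) (hℓ : Differentiable ℝ ℓ)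
    (hnotmin : ∀ ε > 0, ∃ W : Matrix (Fin (d n)) (Fin (d 0)) ℝ, ‖W‖ < ε ∧ ℓ W < ℓ 0) :
    fderiv ℝ (fun Ws : ∀ k : Fin n, Matrix (Fin (d (k + 1))) (Fin (d k)) ℝ =>
        ℓ (chain d (fun k => if h : k < n then Ws ⟨k, h⟩ else 0) 0 n)) 0 = 0 ∧
    fderiv ℝ (fderiv ℝ (fun Ws : ∀ k : Fin n, Matrix (Fin (d (k + 1))) (Fin (d k)) ℝ =>
        ℓ (chain d (fun k => if h : k < n then Ws ⟨k, h⟩ else 0) 0 n))) 0 = 0 ∧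
    ∀ ε > 0, ∃ Ws : ∀ k : Fin n, Matrix (Fin (d (k + 1))) (Fin (d k)) ℝ,
      Real.sqrt (∑ k, ‖Ws k‖ ^ 2) < ε * Real.sqrt n ∧
      ℓ (chain d (fun k => if h : k < n then Ws ⟨k, h⟩ else 0) 0 n) < ℓ 0 :=
  origin_nonstrict_saddle_general d n hn hdims ℓ hnotmin
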